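/- For every n ≥ 1, the element d^{2^n} belongs to Stab_G(3n+2) but not to Stab_G(3n+3); that is, d^{2^n} fixes every word of length 3n+2 but moves some word of length 3n+3. -/

import Mathlib

namespace BVTree

/-- States of the automaton (generators, their inverses, and the identity). -/
inductive Q : Type
  | e | qa | qb | qc | qd | qa' | qb' | qc' | qd'
  deriving DecidableEq

open Q

/-- Output function of the automaton. -/
def Qout : Q → Bool → Bool
  | qa, x => !x
  | qa', x => !x
  | _, x => x

/-- Transition function of the automaton. -/
def Qtrans : Q → Bool → Q
  | qa, false => qd
  | qa, true => e
  | qb, false => qa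
  | qb, true => qc
  | qc, _ => qa
  | qd, false => e
  | qd, true => qb
  | qa', false => e
  | qa', true => qd'
  | qb', false => qa'
  | qb', true => qc'
  | qc', _ => qa'
  | qd', false => e
  | qd', true => qb'
  | e, _ => e

/-- The state corresponding to the inverse automorphism. -/
def Qinv : Q → Q
  | e => e
  | qa => qa' | qb => qb' | qc => qc' | qd => qd'
  | qa' => qa | qb' => qb | qc' => qc | qd' => qd

/-- The action of a state on finite binary words. -/
def act : Q → List Bool → List Bool
  | _, [] => []
  | q, x :: w => Qout q x :: act (Qtrans q x) w

lemma act_inv (q : Q) : ∀ w, act (Qinv q) (act q w) = w := by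
  intro w
  induction w generalizing q with
  | nil => rfl
  | cons x w ih =>
    have h1 : Qout (Qinv q) (Qout q x) = x := by cases q <;> cases x <;> rfl
    have h2 : Qtrans (Qinv q) (Qout q x) = Qinv (Qtrans q x) := by
      cases q <;> cases x <;> rfl
    simp [act, h1, h2, ih]

/-- The tree automorphism determined by a state of the automaton. -/
def aut (q : Q) : Equiv.Perm (List Bool) where
  toFun := act q
  invFun := act (Qinv q)
  left_inv := act_inv q
  right_inv := by
    intro w
    have h : Qinv (Qinv q) = q := by cases q <;> rfl
    simpa [h] using act_inv (Qinv q) w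

/-- The automorphism `a`: `a(0w) = 1·d(w)`, `a(1w) = 0·w`. -/
def a : Equiv.Perm (List Bool) := aut qa
/-- The automorphism `b`: `b(0w) = 0·a(w)`, `b(1w) = 1·c(w)`. -/
def b : Equiv.Perm (List Bool) := aut qb
/-- The automorphism `c`: `c(0w) = 0·a(w)`, `c(1w) = 1·a(w)`. -/
def c : Equiv.Perm (List Bool) := aut qc
/-- The automorphism `d`: `d(0w) = 0·w`, `d(1w) = 1·b(w)`. -/
def d : Equiv.Perm (List Bool) := aut qd

/-- The group `G` generated by `a`, `b`, `c`, `d`. -/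
def G : Subgroup (Equiv.Perm (List Bool)) := Subgroup.closure {a, b, c, d}

/-!
The wreath recursions are `d = (1, b)`, `b = (a, c)`, `c = (a, a)` and `a = σ (d, 1)`, so
`a² = (d, d)`. Hence every power of `d` acts below the vertex `10` as the same power of `a`,
and `d^{2k}` acts below each of the vertices `10x` as `d^k`. Doubling the exponent therefore
pushes the behaviour of `d^{2^n}` three levels down: `d` fixes level `2` and moves `100`, and
by induction `d^{2^n}` fixes level `3n+2` and moves `(100)^{n+1}`.
-/

def FixesUpTo {α : Type*} (g : Equiv.Perm (List α)) (n : ℕ) : Prop :=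
  ∀ v : List α, v.length ≤ n → g v = v

section Words

variable {α : Type*}

lemma FixesUpTo.mono {g : Equiv.Perm (List α)} {m n : ℕ} (h : FixesUpTo g n) (hmn : m ≤ n) :
    FixesUpTo g m :=
  fun v hv => h v (hv.trans hmn)

lemma fixesUpTo_succ {g : Equiv.Perm (List α)} (h : α → Equiv.Perm (List α)) {n : ℕ}
    (hnil : g [] = []) (hcons : ∀ x w, g (x :: w) = x :: h x w) (hfix : ∀ x, FixesUpTo (h x) n) :
    FixesUpTo g (n + 1)
  | [], _ => hnil
  | x :: w, hw => by
    rw [hcons, hfix x w (Nat.le_of_succ_le_succ hw)]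

lemma pow_apply_cons_of_apply_cons {g h : Equiv.Perm (List α)} {x : α}
    (hg : ∀ w, g (x :: w) = x :: h w) (k : ℕ) (w : List α) :
    (g ^ k) (x :: w) = x :: (h ^ k) w := by
  induction k generalizing w with
  | zero => rfl
  | succ k ih => rw [pow_succ, Equiv.Perm.mul_apply, hg, ih, pow_succ, Equiv.Perm.mul_apply]

end Words

lemma act_e : ∀ w, act e w = w
  | [] => rfl
  | x :: w => congrArg (x :: ·) (act_e w)

lemma aut_e : aut e = 1 := Equiv.ext act_e

lemma aut_pow_apply_nil (q : Q) (k : ℕ) : (aut q ^ k) [] = [] :=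
  Equiv.Perm.pow_apply_eq_self_of_apply_eq_self rfl k

lemma aut_pow_apply_cons (q : Q) {x : Bool} (hx : Qout q x = x) (k : ℕ) (w : List Bool) :
    (aut q ^ k) (x :: w) = x :: (aut (Qtrans q x) ^ k) w :=
  pow_apply_cons_of_apply_cons (fun w => congrArg (· :: act (Qtrans q x) w) hx) k w

lemma d_pow_apply_false (k : ℕ) (w : List Bool) : (d ^ k) (false :: w) = false :: w := by
  rw [d, aut_pow_apply_cons qd rfl, Qtrans, aut_e, one_pow, Equiv.Perm.one_apply]

lemma d_pow_apply_true (k : ℕ) (w : List Bool) : (d ^ k) (true :: w) = true :: (b ^ k) w :=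
  aut_pow_apply_cons qd rfl k w

lemma b_pow_apply_false (k : ℕ) (w : List Bool) : (b ^ k) (false :: w) = false :: (a ^ k) w :=
  aut_pow_apply_cons qb rfl k w

lemma b_pow_apply_true (k : ℕ) (w : List Bool) : (b ^ k) (true :: w) = true :: (c ^ k) w :=
  aut_pow_apply_cons qb rfl k w

lemma c_pow_apply_cons (k : ℕ) (x : Bool) (w : List Bool) : (c ^ k) (x :: w) = x :: (a ^ k) w := by
  cases x <;> exact aut_pow_apply_cons qc rfl k w

lemma a_mul_self_apply_cons (x : Bool) (w : List Bool) : (a * a) (x :: w) = x :: d w := by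
  cases x <;> simp only [Equiv.Perm.mul_apply, a, d, aut, Equiv.coe_fn_mk, act, Qout, Qtrans,
    Bool.not_false, Bool.not_true, act_e]

lemma a_pow_two_mul_apply_cons (k : ℕ) (x : Bool) (w : List Bool) :
    (a ^ (2 * k)) (x :: w) = x :: (d ^ k) w := by
  rw [pow_mul, sq]
  exact pow_apply_cons_of_apply_cons (a_mul_self_apply_cons x) k w

lemma d_pow_two_mul_apply (k : ℕ) (x : Bool) (w : List Bool) :
    (d ^ (2 * k)) (true :: false :: x :: w) = true :: false :: x :: (d ^ k) w := by
  rw [d_pow_apply_true, b_pow_apply_false, a_pow_two_mul_apply_cons]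

lemma aut_pow_fixesUpTo_zero (q : Q) (k : ℕ) : FixesUpTo (aut q ^ k) 0 := fun v hv => by
  rw [List.eq_nil_of_length_eq_zero (Nat.le_zero.mp hv), aut_pow_apply_nil]

lemma FixesUpTo.d_pow_succ {k n : ℕ} (h : FixesUpTo (b ^ k) n) : FixesUpTo (d ^ k) (n + 1) := by
  refine fixesUpTo_succ (fun x => if x then b ^ k else 1) (aut_pow_apply_nil qd k) ?_ ?_
  · rintro (_ | _) w
    · exact d_pow_apply_false k w
    · exact d_pow_apply_true k w
  · rintro (_ | _)
    · exact fun v _ => rfl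
    · exact h

lemma FixesUpTo.b_pow_succ {k n : ℕ} (ha : FixesUpTo (a ^ k) n) (hc : FixesUpTo (c ^ k) n) :
    FixesUpTo (b ^ k) (n + 1) := by
  refine fixesUpTo_succ (fun x => if x then c ^ k else a ^ k) (aut_pow_apply_nil qb k) ?_ ?_
  · rintro (_ | _) w
    · exact b_pow_apply_false k w
    · exact b_pow_apply_true k w
  · rintro (_ | _)
    · exact ha
    · exact hc

lemma FixesUpTo.c_pow_succ {k n : ℕ} (h : FixesUpTo (a ^ k) n) : FixesUpTo (c ^ k) (n + 1) :=
  fixesUpTo_succ (fun _ => a ^ k) (aut_pow_apply_nil qc k) (c_pow_apply_cons k) fun _ => h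

lemma FixesUpTo.a_pow_two_mul_succ {k n : ℕ} (h : FixesUpTo (d ^ k) n) :
    FixesUpTo (a ^ (2 * k)) (n + 1) :=
  fixesUpTo_succ (fun _ => d ^ k) (aut_pow_apply_nil qa _) (a_pow_two_mul_apply_cons k) fun _ => h

lemma fixesUpTo_d_pow_two_pow (n : ℕ) : FixesUpTo (d ^ 2 ^ n) (3 * n + 2) := by
  induction n with
  | zero =>
    exact ((aut_pow_fixesUpTo_zero qa 1).b_pow_succ (aut_pow_fixesUpTo_zero qc 1)).d_pow_succ
  | succ n ih =>
    have ha : FixesUpTo (a ^ 2 ^ (n + 1)) (3 * n + 3) := pow_succ' 2 n ▸ ih.a_pow_two_mul_succ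
    exact (ha.b_pow_succ (ha.c_pow_succ.mono (Nat.le_succ _))).d_pow_succ

lemma exists_length_eq_d_pow_two_pow_apply_ne (n : ℕ) :
    ∃ v : List Bool, v.length = 3 * n + 3 ∧ (d ^ 2 ^ n) v ≠ v := by
  induction n with
  | zero => exact ⟨[true, false, false], rfl, by decide⟩
  | succ n ih =>
    obtain ⟨v, hlen, hmoved⟩ := ih
    refine ⟨true :: false :: false :: v, by simp only [List.length_cons, hlen]; omega, ?_⟩
    rw [pow_succ', d_pow_two_mul_apply]
    simpa using hmoved

theorem d_pow_level_stabilizer_general (n : ℕ) :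
    (∀ v : List Bool, v.length = 3 * n + 2 → (d ^ (2 ^ n)) v = v) ∧
    (∃ v : List Bool, v.length = 3 * n + 3 ∧ (d ^ (2 ^ n)) v ≠ v) :=
  ⟨fun v hv => fixesUpTo_d_pow_two_pow n v hv.le, exists_length_eq_d_pow_two_pow_apply_ne n⟩

/-- for `n ≥ 1`, `d^{2^n}` fixes level `3n+2` but moves some word of
length `3n+3`. -/
theorem d_pow_level_stabilizer (n : ℕ) (hn : 1 ≤ n) :
    (∀ v : List Bool, v.length = 3 * n + 2 → (d ^ (2 ^ n)) v = v) ∧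
    (∃ v : List Bool, v.length = 3 * n + 3 ∧ (d ^ (2 ^ n)) v ≠ v) :=
  d_pow_level_stabilizer_general n

end BVTree
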